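/- Let P_n = p_1 p_2 ⋯ p_n denote the n-th primorial. For every positive integer m with m < P_n and 2m ≠ P_n, one has 𝒮(m) < 𝒮(P_n). -/

import Mathlib

open Finset

/-- The Sylvester factor `𝒮 n = ∏_{p ∣ n, p odd prime} (p-1)/(p-2)`. -/
noncomputable def sylvester (n : ℕ) : ℚ :=
  ∏ p ∈ n.primeFactors.erase 2, ((p : ℚ) - 1) / ((p : ℚ) - 2)

/-- The sequence of primes in increasing order (0-indexed:
`nthPrime 0 = 2`, `nthPrime 1 = 3`, ...). -/
noncomputable def nthPrime (n : ℕ) : ℕ := Nat.nth Nat.Prime n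

/-- The `n`-th primorial `P n = p_1 * p_2 * ⋯ * p_n`. -/
noncomputable def primorialSeq (n : ℕ) : ℕ := ∏ i ∈ Finset.range n, nthPrime i

/-!
Index the odd prime factors of `m` by their positions `i ≥ 1` in the sequence of primes. Since
`(p - 1) / (p - 2)` decreases in `p`, replacing the `k` indices by `1, …, k` can only increase
`𝒮`, and replacing the primes by `p_1, …, p_k` can only decrease their product. Hence
`p_1 ⋯ p_k ≤ m < P_n = 2 p_1 ⋯ p_{n-1}` forces `k ≤ n - 1`, and
`𝒮(m) ≤ ∏_{i ≤ k} (p_i - 1)/(p_i - 2) ≤ 𝒮(P_n)`. Both inequalities are equalities only when the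
odd prime factors of `m` are exactly `p_1, …, p_{n-1}`; then `p_1 ⋯ p_{n-1} ∣ m < 2 p_1 ⋯ p_{n-1}`
gives `2m = P_n`.
-/

namespace Finset

/-- The position of `t` in the increasing enumeration `a, a + 1, …` of `T`. -/
def rankFrom (a : ℕ) (T : Finset ℕ) (t : ℕ) : ℕ := a + #{s ∈ T | s < t}

variable {a t : ℕ} {T : Finset ℕ}

theorem rankFrom_le (hT : ∀ s ∈ T, a ≤ s) (ht : t ∈ T) : rankFrom a T t ≤ t := by
  have hsub : {s ∈ T | s < t} ⊆ Ico a t := fun s hs =>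
    mem_Ico.2 ⟨hT s (mem_filter.1 hs).1, (mem_filter.1 hs).2⟩
  have := card_le_card hsub
  rw [Nat.card_Ico] at this
  have := hT t ht
  unfold rankFrom
  omega

theorem rankFrom_lt (ht : t ∈ T) : rankFrom a T t < a + #T :=
  Nat.add_lt_add_left (card_lt_card (filter_ssubset (p := (· < t)).2 ⟨t, ht, lt_irrefl t⟩)) a

theorem strictMonoOn_rankFrom : StrictMonoOn (rankFrom a T) T := by
  intro s hs t _ hst
  refine Nat.add_lt_add_left (card_lt_card ?_) a
  have hsub : {u ∈ T | u < s} ⊆ {u ∈ T | u < t} :=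
    fun _ hu => mem_filter.2 ⟨(mem_filter.1 hu).1, (mem_filter.1 hu).2.trans hst⟩
  refine (ssubset_iff_of_subset hsub).2 ⟨s, ?_, ?_⟩
  · exact mem_filter.2 ⟨hs, hst⟩
  · simp

theorem image_rankFrom : T.image (rankFrom a T) = Ico a (a + #T) := by
  refine eq_of_subset_of_card_le (fun i hi => ?_) ?_
  · obtain ⟨t, ht, rfl⟩ := mem_image.1 hi
    exact mem_Ico.2 ⟨Nat.le_add_right _ _, rankFrom_lt ht⟩
  · rw [card_image_of_injOn strictMonoOn_rankFrom.injOn, Nat.card_Ico, Nat.add_sub_cancel_left]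

theorem exists_rankFrom_lt (hT : ∀ s ∈ T, a ≤ s) (hne : T ≠ Ico a (a + #T)) :
    ∃ t ∈ T, rankFrom a T t < t := by
  by_contra! h
  refine hne ?_
  rw [← image_rankFrom, image_congr fun t ht => le_antisymm (rankFrom_le hT ht) (h t ht)]
  exact image_id.symm

theorem prod_Ico_le_prod_of_monotoneOn {M : Type*} [CommMonoid M] [PartialOrder M]
    [IsOrderedMonoid M] {h : ℕ → M} (hh : MonotoneOn h (Set.Ici a)) (hT : ∀ s ∈ T, a ≤ s) :
    ∏ i ∈ Ico a (a + #T), h i ≤ ∏ t ∈ T, h t := by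
  rw [← image_rankFrom, prod_image strictMonoOn_rankFrom.injOn]
  exact prod_le_prod' fun t ht =>
    hh (Nat.le_add_right a _) (hT t ht) (rankFrom_le hT ht)

theorem prod_lt_prod_Ico_of_strictAntiOn {R : Type*} [CommSemiring R] [PartialOrder R]
    [IsStrictOrderedRing R] {F : ℕ → R} {b : ℕ} (hF : StrictAntiOn F (Set.Ici a))
    (hF1 : ∀ i ≥ a, 1 < F i) (hT : ∀ s ∈ T, a ≤ s) (hb : a + #T ≤ b) (hne : T ≠ Ico a b) :
    ∏ t ∈ T, F t < ∏ i ∈ Ico a b, F i := by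
  have hpos : ∀ i ≥ a, 0 < F i := fun i hi => zero_lt_one.trans (hF1 i hi)
  have hrank : ∏ i ∈ Ico a (a + #T), F i = ∏ t ∈ T, F (rankFrom a T t) := by
    rw [← image_rankFrom, prod_image strictMonoOn_rankFrom.injOn]
  have hle : ∀ t ∈ T, F t ≤ F (rankFrom a T t) := fun t ht =>
    hF.antitoneOn (Nat.le_add_right a _) (hT t ht) (rankFrom_le hT ht)
  rcases hb.lt_or_eq with hb | rfl
  · have htail : 1 < ∏ i ∈ Ico (a + #T) b, F i := by
      simpa using prod_lt_prod_of_nonempty (f := 1) (fun _ _ => zero_lt_one)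
        (fun i hi => hF1 i (le_trans (Nat.le_add_right a _) (mem_Ico.1 hi).1))
        (nonempty_Ico.2 hb)
    calc ∏ t ∈ T, F t ≤ ∏ i ∈ Ico a (a + #T), F i :=
          hrank ▸ prod_le_prod (fun t ht => (hpos t (hT t ht)).le) hle
      _ < (∏ i ∈ Ico a (a + #T), F i) * ∏ i ∈ Ico (a + #T) b, F i :=
          lt_mul_of_one_lt_right (prod_pos fun i hi => hpos i (mem_Ico.1 hi).1) htail
      _ = ∏ i ∈ Ico a b, F i := prod_Ico_consecutive _ (Nat.le_add_right a _) hb.le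
  · obtain ⟨t, ht, hlt⟩ := exists_rankFrom_lt hT hne
    rw [hrank]
    exact prod_lt_prod (fun t ht => hpos t (hT t ht)) hle
      ⟨t, ht, hF (Nat.le_add_right a _) (hT t ht) hlt⟩

end Finset

noncomputable def sylvesterFactor (p : ℕ) : ℚ := ((p : ℚ) - 1) / ((p : ℚ) - 2)

theorem one_lt_sylvesterFactor {p : ℕ} (hp : 3 ≤ p) : 1 < sylvesterFactor p := by
  have hp' : (3 : ℚ) ≤ p := by exact_mod_cast hp
  rw [sylvesterFactor, one_lt_div (by linarith)]
  linarith

theorem strictAntiOn_sylvesterFactor : StrictAntiOn sylvesterFactor (Set.Ici 3) := by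
  intro p hp q _ hpq
  have hp' : (3 : ℚ) ≤ p := by exact_mod_cast hp
  have hpq' : (p : ℚ) < q := by exact_mod_cast hpq
  rw [sylvesterFactor, sylvesterFactor, div_lt_div_iff₀ (by linarith) (by linarith)]
  linarith

theorem nthPrime_prime (n : ℕ) : (nthPrime n).Prime :=
  Nat.nth_mem_of_infinite Nat.infinite_setOfPred_prime n

theorem nthPrime_strictMono : StrictMono nthPrime :=
  Nat.nth_strictMono Nat.infinite_setOfPred_prime

theorem nthPrime_zero : nthPrime 0 = 2 :=
  Nat.nth_count (p := Nat.Prime) Nat.prime_two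

theorem three_le_nthPrime {i : ℕ} (hi : 1 ≤ i) : 3 ≤ nthPrime i := by
  have := nthPrime_strictMono hi
  rwa [nthPrime_zero] at this

theorem prod_image_nthPrime {M : Type*} [CommMonoid M] (s : Finset ℕ) (f : ℕ → M) :
    ∏ p ∈ s.image nthPrime, f p = ∏ i ∈ s, f (nthPrime i) :=
  prod_image fun _ _ _ _ h => nthPrime_strictMono.injective h

theorem nthPrime_count {p : ℕ} (hp : p.Prime) : nthPrime (Nat.count Nat.Prime p) = p :=
  Nat.nth_count hp

theorem count_nthPrime (i : ℕ) : Nat.count Nat.Prime (nthPrime i) = i :=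
  Nat.count_nth_of_infinite Nat.infinite_setOfPred_prime i

/-- The indices `i ≥ 1` with `nthPrime i ∣ m`, for `m ≠ 0`. -/
def oddPrimeIndices (m : ℕ) : Finset ℕ := (m.primeFactors.erase 2).image (Nat.count Nat.Prime)

theorem image_nthPrime_oddPrimeIndices (m : ℕ) :
    (oddPrimeIndices m).image nthPrime = m.primeFactors.erase 2 := by
  rw [oddPrimeIndices, image_image]
  refine (image_congr fun p hp => ?_).trans image_id
  exact nthPrime_count (Nat.prime_of_mem_primeFactors (mem_of_mem_erase hp))

theorem one_le_of_mem_oddPrimeIndices {m i : ℕ} (hi : i ∈ oddPrimeIndices m) : 1 ≤ i := by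
  obtain ⟨p, hp, rfl⟩ := mem_image.1 hi
  have h2 : 2 < p := lt_of_le_of_ne (Nat.prime_of_mem_primeFactors (mem_of_mem_erase hp)).two_le
    (ne_of_mem_erase hp).symm
  exact Nat.one_le_iff_ne_zero.2 (Nat.count_strict_mono Nat.prime_two h2).ne_bot

theorem sylvester_eq_prod_oddPrimeIndices (m : ℕ) :
    sylvester m = ∏ i ∈ oddPrimeIndices m, sylvesterFactor (nthPrime i) := by
  rw [sylvester, ← image_nthPrime_oddPrimeIndices, prod_image_nthPrime]
  rfl

theorem prod_nthPrime_oddPrimeIndices_dvd (m : ℕ) : ∏ i ∈ oddPrimeIndices m, nthPrime i ∣ m := by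
  rw [← prod_image_nthPrime _ fun p => p, image_nthPrime_oddPrimeIndices]
  exact (prod_dvd_prod_of_subset _ _ _ (erase_subset _ _)).trans (Nat.prod_primeFactors_dvd m)

theorem oddPrimeIndices_primorialSeq (n : ℕ) : oddPrimeIndices (primorialSeq n) = Ico 1 n := by
  have hfac : (primorialSeq n).primeFactors = (range n).image nthPrime := by
    rw [primorialSeq, ← prod_image_nthPrime _ fun p => p]
    exact Nat.primeFactors_prod fun p hp => by
      obtain ⟨i, -, rfl⟩ := mem_image.1 hp
      exact nthPrime_prime i
  rw [oddPrimeIndices, hfac, ← nthPrime_zero, ← image_erase nthPrime_strictMono.injective,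
    image_image, image_congr (f := Nat.count Nat.Prime ∘ nthPrime) (g := id)
      fun i _ => count_nthPrime i, image_id]
  ext i
  simp only [mem_erase, mem_range, mem_Ico]
  omega

theorem primorialSeq_eq_two_mul {n : ℕ} (hn : 1 ≤ n) :
    primorialSeq n = 2 * ∏ i ∈ Ico 1 n, nthPrime i := by
  rw [primorialSeq, range_eq_Ico, prod_eq_prod_Ico_succ_bot hn, nthPrime_zero]

theorem one_le_of_lt_primorialSeq {n m : ℕ} (hm : 0 < m) (hlt : m < primorialSeq n) : 1 ≤ n := by
  by_contra! h
  simp [Nat.lt_one_iff.1 h, primorialSeq] at hlt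
  omega

theorem one_add_card_oddPrimeIndices_le {n m : ℕ} (hm : 0 < m) (hlt : m < primorialSeq n) :
    1 + #(oddPrimeIndices m) ≤ n := by
  have hn := one_le_of_lt_primorialSeq hm hlt
  rw [primorialSeq_eq_two_mul hn] at hlt
  by_contra! h
  have := three_le_nthPrime hn
  have : (∏ i ∈ Ico 1 n, nthPrime i) * nthPrime n ≤ m := calc
    _ = ∏ i ∈ Ico 1 (n + 1), nthPrime i := (prod_Ico_succ_top hn _).symm
    _ ≤ ∏ i ∈ Ico 1 (1 + #(oddPrimeIndices m)), nthPrime i :=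
      prod_le_prod_of_subset_of_one_le' (Ico_subset_Ico_right (by omega))
        fun i _ _ => (nthPrime_prime i).one_lt.le
    _ ≤ ∏ i ∈ oddPrimeIndices m, nthPrime i :=
      prod_Ico_le_prod_of_monotoneOn (nthPrime_strictMono.monotone.monotoneOn _)
        fun _ => one_le_of_mem_oddPrimeIndices
    _ ≤ m := Nat.le_of_dvd hm (prod_nthPrime_oddPrimeIndices_dvd m)
  nlinarith

theorem oddPrimeIndices_ne_Ico {n m : ℕ} (hm : 0 < m) (hlt : m < primorialSeq n)
    (hne : 2 * m ≠ primorialSeq n) : oddPrimeIndices m ≠ Ico 1 n := by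
  intro hT
  have hn := one_le_of_lt_primorialSeq hm hlt
  rw [primorialSeq_eq_two_mul hn] at hlt hne
  obtain ⟨t, rfl⟩ := hT ▸ prod_nthPrime_oddPrimeIndices_dvd m
  have : t < 2 := by nlinarith
  interval_cases t <;> omega

theorem sylvester_stmt16 (n m : ℕ) (hm : 1 ≤ m) (hlt : m < primorialSeq n)
    (hne : 2 * m ≠ primorialSeq n) :
    sylvester m < sylvester (primorialSeq n) := by
  have hF : StrictAntiOn (fun i => sylvesterFactor (nthPrime i)) (Set.Ici 1) :=
    strictAntiOn_sylvesterFactor.comp_strictMonoOn (nthPrime_strictMono.strictMonoOn _)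
      fun _ => three_le_nthPrime
  rw [sylvester_eq_prod_oddPrimeIndices, sylvester_eq_prod_oddPrimeIndices,
    oddPrimeIndices_primorialSeq]
  exact prod_lt_prod_Ico_of_strictAntiOn hF
    (fun _ hi => one_lt_sylvesterFactor (three_le_nthPrime hi))
    (fun _ => one_le_of_mem_oddPrimeIndices) (one_add_card_oddPrimeIndices_le hm hlt)
    (oddPrimeIndices_ne_Ico hm hlt hne)
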